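/- arXiv:2003.08903 — 2 statements merged into one kernel-verified Lean document; each statement's English description precedes it below -/
import Mathlib

section
/- Let p be a prime, X a nonempty totally ordered set, S the free profinite group on basis X, and n ≥ 2. For Lyndon words w, w' in X* of lengths i, i' respectively, both in J(n) = { ⌈n/p^k⌉ : k ≥ 0 } ∩ [1,n], one has: ⟨w, w⟩_n = 1; and ⟨w, w'⟩_n = 0 whenever w ≺ w', where ≼ is the order comparing first by length and then alphabetically. Hence the fundamental matrix [⟨w,w'⟩_n]^T_{w,w'}, indexed by the Lyndon words of lengths in J(n) ordered by ≼, is unitriangular (unipotent upper-triangular). -/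
/-- Ceiling division of natural numbers: `cdiv a b = ⌈a / b⌉` (for `b > 0`). -/
def cdiv (a b : ℕ) : ℕ := (a + b - 1) / b

/-- `jn p n i` is `j_n(i)`, the least integer `j ≥ 0` such that `i * p ^ j ≥ n`. -/
noncomputable def jn (p n i : ℕ) : ℕ := sInf {j : ℕ | n ≤ i * p ^ j}

/-- `J(n)`: the set of integers `1 ≤ i ≤ n` of the form `i = ⌈n / p^k⌉` for some `k ≥ 0`. -/
def Jset (p n : ℕ) : Set ℕ := {i | 1 ≤ i ∧ i ≤ n ∧ ∃ k : ℕ, i = cdiv n (p ^ k)}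

/-- The commutator `[g, h] = g⁻¹ h⁻¹ g h`. -/
def pcomm {H : Type*} [Group H] (g h : H) : H := g⁻¹ * h⁻¹ * g * h

variable {G : Type*} [Group G] [TopologicalSpace G] [IsTopologicalGroup G]

/-- The closed subgroup of a topological group generated by a set. -/
def closedClosure (s : Set G) : Subgroup G := (Subgroup.closure s).topologicalClosure

/-- For closed subgroups `K, K'` of `G`, the closed subgroup `[K, K']` generated by all
commutators `[k, k'] = k⁻¹ k'⁻¹ k k'` with `k ∈ K`, `k' ∈ K'`. -/
def closedCommutator (K K' : Subgroup G) : Subgroup G :=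
  closedClosure {x | ∃ k ∈ K, ∃ k' ∈ K', x = pcomm k k'}

/-- For a closed subgroup `K` of `G` and `m ≥ 1`, the closed subgroup `K^m` generated by all
`m`-th powers of elements of `K`. -/
def closedPow (K : Subgroup G) (m : ℕ) : Subgroup G :=
  closedClosure {x | ∃ k ∈ K, x = k ^ m}

/-- The (closed) lower central series of a topological group: `G^{(1)} = G` and
`G^{(i+1)} = [G, G^{(i)}]`.  (The value at `0` is junk, set to `⊤`.) -/
def lcsC (G : Type*) [Group G] [TopologicalSpace G] [IsTopologicalGroup G] : ℕ → Subgroup G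
  | 0 => ⊤
  | 1 => ⊤
  | (i + 2) => closedCommutator ⊤ (lcsC G (i + 1))

/-- The `p`-Zassenhaus filtration of a topological group:
`G_{(n,p)} = ∏_{i p^j ≥ n} (G^{(i)})^{p^j}`, the closed subgroup generated by all `p^j`-th
powers of elements of the `i`-th closed lower central series term with `i * p^j ≥ n`. -/
def Zas (p n : ℕ) (G : Type*) [Group G] [TopologicalSpace G] [IsTopologicalGroup G] : Subgroup G :=
  closedClosure {g | ∃ i j : ℕ, 1 ≤ i ∧ n ≤ i * p ^ j ∧ ∃ h ∈ lcsC G i, g = h ^ p ^ j}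

/-- The closed subgroup `(G_{(n,p)})^p [G, G_{(n,p)}]` generated by `p`-th powers of elements of
`G_{(n,p)}` together with commutators `[G, G_{(n,p)}]`. -/
def ZasPow (p n : ℕ) (G : Type*) [Group G] [TopologicalSpace G] [IsTopologicalGroup G] :
    Subgroup G :=
  ((closedPow (Zas p n G) p) ⊔ (closedCommutator ⊤ (Zas p n G))).topologicalClosure

theorem closure_normal_of_conj {H : Type*} [Group H] (s : Set H)
    (h : ∀ g : H, ∀ x ∈ s, g * x * g⁻¹ ∈ s) : (Subgroup.closure s).Normal := by
  constructor
  intro x hx g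
  have hmem : ((MulAut.conj g).toMonoidHom : H →* H) x ∈
      Subgroup.map (MulAut.conj g).toMonoidHom (Subgroup.closure s) :=
    Subgroup.mem_map_of_mem _ hx
  rw [MonoidHom.map_closure] at hmem
  have hsub : ((MulAut.conj g).toMonoidHom : H →* H) '' s ⊆ s := by
    rintro y ⟨z, hz, rfl⟩
    simpa [MulAut.conj] using h g z hz
  have := Subgroup.closure_mono hsub hmem
  simpa [MulAut.conj] using this

theorem closedClosure_normal (s : Set G) (h : ∀ g : G, ∀ x ∈ s, g * x * g⁻¹ ∈ s) :
    (closedClosure s).Normal := by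
  haveI := closure_normal_of_conj s h
  exact Subgroup.is_normal_topologicalClosure _

theorem lcsC_normal (G : Type*) [Group G] [TopologicalSpace G] [IsTopologicalGroup G] :
    ∀ i : ℕ, (lcsC G i).Normal
  | 0 => by rw [lcsC]; infer_instance
  | 1 => by rw [lcsC]; infer_instance
  | (i + 2) => by
    rw [lcsC]
    have hN := lcsC_normal G (i + 1)
    apply closedClosure_normal
    rintro g x ⟨k, -, k', hk', rfl⟩
    refine ⟨g * k * g⁻¹, trivial, g * k' * g⁻¹, hN.conj_mem k' hk' g, ?_⟩
    simp only [pcomm]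
    group

/-- The Zassenhaus subgroups are normal (indeed characteristic). -/
theorem Zas_normal (p n : ℕ) (G : Type*) [Group G] [TopologicalSpace G] [IsTopologicalGroup G] :
    (Zas p n G).Normal := by
  apply closedClosure_normal
  rintro g x ⟨i, j, hi, hij, h, hh, rfl⟩
  refine ⟨i, j, hi, hij, g * h * g⁻¹, (lcsC_normal G i).conj_mem h hh g, ?_⟩
  rw [conj_pow]

instance (p n : ℕ) (G : Type*) [Group G] [TopologicalSpace G] [IsTopologicalGroup G] :
    (Zas p n G).Normal := Zas_normal p n G

/-- `ι : X → S` makes `S` the free profinite group on the basis `X` (in the sense of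
Fried–Jarden §17.4): `S` is a profinite group, the basis converges to `1`, and every map from
`X` to a finite group `A` which is `1` almost everywhere extends uniquely to a continuous
(equivalently: open-kernel) homomorphism `S → A`. -/
structure IsFreeProfinite (X : Type*) (S : Type*) [Group S] [TopologicalSpace S]
    (ι : X → S) : Prop where
  compact : CompactSpace S
  t2 : T2Space S
  totallyDisconnected : TotallyDisconnectedSpace S
  topGroup : IsTopologicalGroup S
  converges : ∀ N : Subgroup S, N.Normal → IsOpen (N : Set S) → {x | ι x ∉ N}.Finite
  lift : ∀ (A : Type) (_ : Group A) (_ : Finite A) (φ : X → A), {x | φ x ≠ 1}.Finite →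
    ∃! ψ : S →* A, IsOpen (ψ.ker : Set S) ∧ ∀ x, ψ (ι x) = φ x

/-- `ε` is the family of coefficients of the continuous Magnus homomorphism
`Λ : S → ℤ_p⟨⟨X⟩⟩^×` determined by `Λ(ι x) = 1 + x`:  each coefficient function
`ε_w : S → ℤ_p` is continuous, `ε_∅ = 1`, multiplicativity of `Λ` reads
`ε_w(στ) = ∑_{w = u v} ε_u(σ) ε_v(τ)`, and the coefficients of `Λ(ι x) = 1 + x` are as
prescribed. -/
structure IsMagnus (p : ℕ) [Fact p.Prime] {X S : Type*} [DecidableEq X] [Group S] [TopologicalSpace S]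
    (ι : X → S) (ε : List X → S → ℤ_[p]) : Prop where
  continuous : ∀ w, Continuous (ε w)
  empty : ∀ σ, ε [] σ = 1
  mul : ∀ (w : List X) (σ τ : S), ε w (σ * τ) =
    ∑ k ∈ Finset.range (w.length + 1), ε (w.take k) σ * ε (w.drop k) τ
  gen : ∀ (x : X) (w : List X), ε w (ι x) = if w = [] ∨ w = [x] then 1 else 0

/-- A nonempty word over a totally ordered alphabet is *Lyndon* if it is strictly smaller,
in the alphabetic (lexicographic) order, than each of its nontrivial proper right factors. -/
def IsLyndon {X : Type*} [LinearOrder X] (w : List X) : Prop :=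
  w ≠ [] ∧ ∀ k : ℕ, k < w.length → 0 < k → w < w.drop k

instance {X : Type*} [LinearOrder X] (w : List X) : Decidable (IsLyndon w) := by
  unfold IsLyndon; infer_instance

/-- `τ_w` for a Lyndon word `w`: `τ_(x) = ι x`, and `τ_w = [τ_u, τ_v] = τ_u⁻¹ τ_v⁻¹ τ_u τ_v`
for the standard factorization `w = u v` of a Lyndon word `w` of length `≥ 2`; here `v` is the
longest nontrivial proper right factor of `w` which is Lyndon, i.e. `v = w.drop k` for the
least `k ≥ 1` such that `w.drop k` is Lyndon.  (Junk values otherwise.) -/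
noncomputable def tau {X : Type*} [LinearOrder X] {S : Type*} [Group S] (ι : X → S) :
    List X → S
  | [] => 1
  | [x] => ι x
  | (x :: y :: t) =>
    if h : ∃ k, k < (x :: y :: t).length ∧ 0 < k ∧ IsLyndon ((x :: y :: t).drop k) then
      have h1 : Nat.find h < (x :: y :: t).length := (Nat.find_spec h).1
      have h2 : 0 < Nat.find h := (Nat.find_spec h).2.1
      (tau ι ((x :: y :: t).take (Nat.find h)))⁻¹ *
        (tau ι ((x :: y :: t).drop (Nat.find h)))⁻¹ *
        tau ι ((x :: y :: t).take (Nat.find h)) * tau ι ((x :: y :: t).drop (Nat.find h))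
    else 1
  termination_by w => w.length
  decreasing_by
  all_goals simp only [List.length_take, List.length_drop, List.length_cons] at *
  all_goals omega

/-- `σ_w = τ_w ^ (p ^ j_n(|w|))`. -/
noncomputable def sigw {X : Type*} [LinearOrder X] {S : Type*} [Group S]
    (p n : ℕ) (ι : X → S) (w : List X) : S :=
  tau ι w ^ p ^ jn p n w.length

/-- The total order `≼` on words: first compare lengths, then compare alphabetically. -/
def prec {X : Type*} [LinearOrder X] (w w' : List X) : Prop :=
  w.length < w'.length ∨ (w.length = w'.length ∧ w < w')
/-! ### Auxiliary lemmas -/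

section LexLemmas

variable {X : Type*} [LinearOrder X]

theorem my_cons_lt_cons_iff {x y : X} {xs ys : List X} :
    (x::xs) < (y::ys) ↔ x < y ∨ (x = y ∧ xs < ys) := by
  constructor
  · intro hlt
    cases hlt with
    | rel h => exact Or.inl h
    | cons h => exact Or.inr ⟨rfl, h⟩
  · rintro (h | ⟨rfl, h⟩)
    · exact List.Lex.rel h
    · exact List.Lex.cons h

theorem my_append_lt_append_iff :
    ∀ (a c b d : List X), a.length = c.length →
      (a ++ b < c ++ d ↔ a < c ∨ (a = c ∧ b < d))
  | [], [], b, d, _ => by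
      simp only [List.nil_append]
      constructor
      · intro h; exact Or.inr ⟨by trivial, h⟩
      · rintro (h | ⟨-, h⟩)
        · exact absurd h (by intro hh; cases hh)
        · exact h
  | [], c::cs, b, d, h => by simp at h
  | a::as, [], b, d, h => by simp at h
  | a::as, c::cs, b, d, h => by
      simp only [List.length_cons, Nat.add_right_cancel_iff] at h
      simp only [List.cons_append, my_cons_lt_cons_iff,
        my_append_lt_append_iff as cs b d h]
      constructor
      · rintro (h1 | ⟨rfl, (h2 | ⟨rfl, h3⟩)⟩)
        · exact Or.inl (Or.inl h1)
        · exact Or.inl (Or.inr ⟨rfl, h2⟩)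
        · exact Or.inr ⟨rfl, h3⟩
      · rintro ((h1 | ⟨rfl, h2⟩) | ⟨heq, h3⟩)
        · exact Or.inl h1
        · exact Or.inr ⟨rfl, Or.inl h2⟩
        · rw [List.cons.injEq] at heq
          exact Or.inr ⟨heq.1, Or.inr ⟨heq.2, h3⟩⟩

theorem my_lt_append_right : ∀ (a c : List X), c ≠ [] → a < a ++ c
  | [], [], h => absurd rfl h
  | [], x::xs, _ => List.nil_lt_cons x xs
  | a::as, c, h => by
      rw [List.cons_append, my_cons_lt_cons_iff]
      exact Or.inr ⟨rfl, my_lt_append_right as c h⟩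

theorem my_singleton_lt {x y : X} : ([x] : List X) < [y] ↔ x < y := by
  rw [my_cons_lt_cons_iff]
  constructor
  · rintro (h | ⟨-, h⟩)
    · exact h
    · cases h
  · exact Or.inl

/-- comparing a word with a shorter one: `a ++ b < c ↔ a < c` when `|a| = |c|`. -/
theorem my_append_lt_iff {a c : List X} (b : List X) (h : a.length = c.length) :
    a ++ b < c ↔ a < c := by
  nth_rewrite 1 [show c = c ++ [] by simp]
  rw [my_append_lt_append_iff a c b [] h]
  constructor
  · rintro (h1 | ⟨rfl, h2⟩)
    · exact h1
    · cases h2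
  · exact Or.inl

theorem my_lt_append_iff {a c : List X} (b : List X) (h : a.length = c.length) (hb : b ≠ []) :
    c < a ++ b ↔ c < a ∨ c = a := by
  nth_rewrite 1 [show c = c ++ [] by simp]
  rw [my_append_lt_append_iff c a [] b h.symm]
  constructor
  · rintro (h1 | ⟨rfl, -⟩)
    · exact Or.inl h1
    · exact Or.inr rfl
  · rintro (h1 | rfl)
    · exact Or.inl h1
    · exact Or.inr ⟨rfl, by cases b with | nil => exact absurd rfl hb | cons z zs => exact List.nil_lt_cons z zs⟩

end LexLemmas

section LyndonLemmas

variable {X : Type*} [LinearOrder X]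

theorem isLyndon_singleton (x : X) : IsLyndon [x] :=
  ⟨by simp, by intro k h1 h2; simp at h1; omega⟩

theorem exists_lyndon_suffix (w : List X) (hw : 2 ≤ w.length) :
    ∃ k, k < w.length ∧ 0 < k ∧ IsLyndon (w.drop k) := by
  refine ⟨w.length - 1, by omega, by omega, ?_⟩
  have hl : (w.drop (w.length - 1)).length = 1 := by rw [List.length_drop]; omega
  obtain ⟨x, hx⟩ := List.length_eq_one_iff.mp hl
  rw [hx]; exact isLyndon_singleton x

theorem drop_find_le (w : List X)
    (h : ∃ k, k < w.length ∧ 0 < k ∧ IsLyndon (w.drop k)) :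
    ∀ m, 0 < m → m < w.length → w.drop (Nat.find h) ≤ w.drop m := by
  have key : ∀ d m, w.length - m ≤ d → 0 < m → m < w.length →
      w.drop (Nat.find h) ≤ w.drop m := by
    intro d
    induction d with
    | zero => intro m hd h0 h1; omega
    | succ d ih =>
      intro m hd h0 h1
      rcases lt_trichotomy m (Nat.find h) with hm | hm | hm
      · have hnl : ¬ IsLyndon (w.drop m) := by
          intro hly
          exact Nat.find_min h hm ⟨h1, h0, hly⟩
        rw [IsLyndon] at hnl
        push_neg at hnl
        have hne : w.drop m ≠ [] := List.ne_nil_of_length_pos (by rw [List.length_drop]; omega)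
        obtain ⟨r, hr1, hr0, hr2⟩ := hnl hne
        rw [List.length_drop] at hr1
        rw [List.drop_drop] at hr2
        exact le_trans (ih (m + r) (by omega) (by omega) (by omega)) hr2
      · rw [hm]
      · have hly : IsLyndon (w.drop (Nat.find h)) := (Nat.find_spec h).2.2
        have h2 := hly.2 (m - Nat.find h)
          (by rw [List.length_drop]; have := (Nat.find_spec h).1; omega) (by omega)
        rw [List.drop_drop] at h2
        have : Nat.find h + (m - Nat.find h) = m := by omega
        rw [this] at h2
        exact le_of_lt h2
  intro m h0 h1
  exact key (w.length - m) m le_rfl h0 h1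

theorem drop_find_lt (w : List X)
    (h : ∃ k, k < w.length ∧ 0 < k ∧ IsLyndon (w.drop k))
    {m : ℕ} (h0 : 0 < m) (h1 : m < w.length) (hne : m ≠ Nat.find h) :
    w.drop (Nat.find h) < w.drop m := by
  refine lt_of_le_of_ne (drop_find_le w h m h0 h1) ?_
  intro heq
  have := congrArg List.length heq
  rw [List.length_drop, List.length_drop] at this
  have hk := (Nat.find_spec h).1
  omega

theorem take_find_lyndon (w : List X) (hw : IsLyndon w)
    (h : ∃ k, k < w.length ∧ 0 < k ∧ IsLyndon (w.drop k)) :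
    IsLyndon (w.take (Nat.find h)) := by
  set k := Nat.find h with hkdef
  have hk1 : k < w.length := (Nat.find_spec h).1
  have hk0 : 0 < k := (Nat.find_spec h).2.1
  constructor
  · exact List.ne_nil_of_length_pos (by rw [List.length_take]; omega)
  intro m hm hm0
  rw [List.length_take] at hm
  have hmk : m < k := lt_of_lt_of_le hm (min_le_left _ _)
  -- s := (w.take k).drop m ; key: s ++ w.drop k = w.drop m
  have hsv : (w.take k).drop m ++ w.drop k = w.drop m := by
    conv_rhs => rw [← List.take_append_drop k w]
    rw [List.drop_append_of_le_length (by rw [List.length_take]; omega)]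
  have hslen : ((w.take k).drop m).length = k - m := by
    rw [List.length_drop, List.length_take]; omega
  set s := (w.take k).drop m with hsdef
  -- A1 : w < s ++ w.drop k
  have hA1 : w < s ++ w.drop k := by
    rw [hsv]; exact hw.2 m (by omega) hm0
  by_cases hss : (w.take k).take (k - m) = s
  · -- s is a prefix of w.take k : contradiction
    exfalso
    have hq : (w.take k).take (k - m) ++ (w.take k).drop (k - m) = w.take k :=
      List.take_append_drop _ _
    rw [hss] at hq
    set q := (w.take k).drop (k - m) with hqdef
    have hqlen : q.length = m := by rw [hqdef, List.length_drop, List.length_take]; omega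
    have hw' : w = s ++ (q ++ w.drop k) := by
      conv_lhs => rw [← List.take_append_drop k w]
      rw [← hq, List.append_assoc]
    have hqv : q ++ w.drop k = w.drop (k - m) := by
      conv_rhs => rw [← List.take_append_drop k w]
      rw [List.drop_append_of_le_length (by rw [List.length_take]; omega)]
    -- from A1 : q ++ w.drop k < w.drop k
    have h2 : q ++ w.drop k < w.drop k := by
      have := hA1
      nth_rewrite 1 [hw'] at this
      rw [my_append_lt_append_iff s s _ _ rfl] at this
      rcases this with h3 | ⟨-, h3⟩
      · exact absurd h3 (lt_irrefl s)
      · exact h3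
    -- but minimality gives w.drop k < w.drop (k-m) = q ++ w.drop k
    have h3 : w.drop k < q ++ w.drop k := by
      rw [hqv]
      exact drop_find_lt w h (by omega) (by omega) (by omega)
    exact lt_asymm h2 h3
  · -- first-difference case
    have htt : (w.take k).take (k - m) ++ (w.take k).drop (k - m) = w.take k :=
      List.take_append_drop _ _
    have hslen' : ((w.take k).take (k - m)).length = k - m := by
      rw [List.length_take, List.length_take]; omega
    have hlt : (w.take k).take (k - m) < s := by
      have := hA1
      conv_lhs at this => rw [← List.take_append_drop k w, ← htt, List.append_assoc]
      rw [my_append_lt_append_iff _ s _ _ (by rw [hslen', hslen])] at this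
      rcases this with h3 | ⟨h3, -⟩
      · exact h3
      · exact absurd h3 hss
    -- conclude w.take k < s
    calc w.take k = (w.take k).take (k - m) ++ (w.take k).drop (k - m) := htt.symm
    _ < s := by
      rw [my_append_lt_iff _ (by rw [hslen', hslen])]
      exact hlt

end LyndonLemmas
section SumHelper

theorem my_sum_split {M : Type*} [AddCommMonoid M] (n : ℕ) (hn : 1 ≤ n) (f : ℕ → M) :
    ∑ k ∈ Finset.range (n + 1), f k = f 0 + (∑ k ∈ Finset.Ico 1 n, f k) + f n := by
  rw [Finset.sum_range_succ, Finset.range_eq_Ico, Finset.sum_eq_sum_Ico_succ_bot hn f]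

theorem my_sum_split₀ {M : Type*} [AddCommMonoid M] (n : ℕ) (hn : 1 ≤ n) (f : ℕ → M)
    (hf : ∀ k, 0 < k → k < n → f k = 0) :
    ∑ k ∈ Finset.range (n + 1), f k = f 0 + f n := by
  rw [my_sum_split n hn f, Finset.sum_eq_zero, add_zero]
  intro k hk
  rw [Finset.mem_Ico] at hk
  exact hf k hk.1 hk.2

theorem my_sum_split₁ {M : Type*} [AddCommMonoid M] (n a : ℕ) (hn : 1 ≤ n) (ha0 : 0 < a)
    (ha : a < n) (f : ℕ → M) (hf : ∀ k, 0 < k → k < n → k ≠ a → f k = 0) :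
    ∑ k ∈ Finset.range (n + 1), f k = f 0 + f a + f n := by
  rw [my_sum_split n hn f]
  congr 2
  refine Finset.sum_eq_single_of_mem a (by rw [Finset.mem_Ico]; omega) ?_
  intro k hk hka
  rw [Finset.mem_Ico] at hk
  exact hf k hk.1 hk.2 hka

end SumHelper

section MagnusLemmas

variable {p : ℕ} [Fact p.Prime] {X S : Type*} [LinearOrder X] [Group S]
  [TopologicalSpace S] {ι : X → S} {ε : List X → S → ℤ_[p]}

omit [LinearOrder X] in
theorem my_take_ne_nil {w : List X} {k : ℕ} (hk : 0 < k) (hw : w ≠ []) : w.take k ≠ [] :=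
  List.ne_nil_of_length_pos (by rw [List.length_take]; simp [hk, List.length_pos_iff.mpr hw])

omit [LinearOrder X] in
theorem my_drop_ne_nil {w : List X} {k : ℕ} (hk : k < w.length) : w.drop k ≠ [] :=
  List.ne_nil_of_length_pos (by rw [List.length_drop]; omega)

theorem eps_one (hε : IsMagnus p ι ε) :
    ∀ (L : ℕ) (w : List X), w ≠ [] → w.length ≤ L → ε w 1 = 0 := by
  intro L
  induction L with
  | zero => intro w hw hL; exact absurd (List.length_eq_zero_iff.mp (by omega)) hw
  | succ L ih =>
    intro w hw hL
    have hn : 1 ≤ w.length := List.length_pos_iff.mpr hw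
    have hmid : ∀ k, 0 < k → k < w.length → ε (w.take k) 1 * ε (w.drop k) 1 = 0 := by
      intro k hk0 hkn
      have : ε (w.take k) 1 = 0 := by
        refine ih (w.take k) (my_take_ne_nil hk0 hw) ?_
        rw [List.length_take]; omega
      rw [this, zero_mul]
    have hm := hε.mul w 1 1
    rw [mul_one, my_sum_split₀ w.length hn _ hmid, List.take_zero, List.drop_zero,
      List.take_length, List.drop_length, hε.empty, one_mul, mul_one] at hm
    linear_combination -hm

/-- `Dd ε d σ` : the Magnus expansion of `σ` is `≡ 1` modulo degree `d`. -/
def Dd (ε : List X → S → ℤ_[p]) (d : ℕ) (σ : S) : Prop :=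
  ∀ z : List X, z ≠ [] → z.length < d → ε z σ = 0

theorem eps_pow (hε : IsMagnus p ι ε) {d : ℕ} {σ : S} (hσ : Dd ε d σ) :
    ∀ (m : ℕ) (w : List X), w ≠ [] → w.length ≤ d →
      ε w (σ ^ m) = (m : ℤ_[p]) * ε w σ := by
  intro m
  induction m with
  | zero =>
    intro w hw hwd
    rw [pow_zero, eps_one hε w.length w hw le_rfl]
    simp
  | succ m ih =>
    intro w hw hwd
    have hn : 1 ≤ w.length := List.length_pos_iff.mpr hw
    have hmid : ∀ k, 0 < k → k < w.length →
        ε (w.take k) (σ ^ m) * ε (w.drop k) σ = 0 := by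
      intro k hk0 hkn
      have h1 : ε (w.take k) (σ ^ m) = (m : ℤ_[p]) * ε (w.take k) σ := by
        refine ih (w.take k) (my_take_ne_nil hk0 hw) ?_
        rw [List.length_take]; omega
      have h2 : ε (w.take k) σ = 0 := by
        refine hσ (w.take k) (my_take_ne_nil hk0 hw) ?_
        rw [List.length_take]; omega
      rw [h1, h2, mul_zero, zero_mul]
    have hm := hε.mul w (σ ^ m) σ
    rw [my_sum_split₀ w.length hn _ hmid, List.take_zero, List.drop_zero,
      List.take_length, List.drop_length, hε.empty, one_mul, hε.empty, mul_one,
      ih w hw hwd, ← pow_succ σ m] at hm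
    rw [hm]
    push_cast
    ring

theorem eps_pcomm (hε : IsMagnus p ι ε) {a b : ℕ} {σ τ : S} (ha : 1 ≤ a) (hb : 1 ≤ b)
    (hσ : Dd ε a σ) (hτ : Dd ε b τ) :
    ∀ (L : ℕ) (w : List X), w ≠ [] → w.length ≤ L → w.length ≤ a + b →
      ε w (pcomm σ τ) = if w.length = a + b
        then ε (w.take a) σ * ε (w.drop a) τ - ε (w.take b) τ * ε (w.drop b) σ
        else 0 := by
  intro L
  induction L with
  | zero => intro w hw hL hab; exact absurd (List.length_eq_zero_iff.mp (by omega)) hw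
  | succ L ih =>
    intro w hw hL hab
    have hn : 1 ≤ w.length := List.length_pos_iff.mpr hw
    -- step 1 : ε w (pcomm σ τ) = ε w (σ * τ) - ε w (τ * σ)
    have hst : (τ * σ) * pcomm σ τ = σ * τ := by rw [pcomm]; group
    have hmid1 : ∀ k, 0 < k → k < w.length →
        ε (w.take k) (τ * σ) * ε (w.drop k) (pcomm σ τ) = 0 := by
      intro k hk0 hkn
      have hd : ε (w.drop k) (pcomm σ τ) = 0 := by
        have hlen : (w.drop k).length = w.length - k := List.length_drop
        rw [ih (w.drop k) (my_drop_ne_nil (by omega)) (by omega) (by omega)]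
        rw [if_neg (by omega)]
      rw [hd, mul_zero]
    have h1 := hε.mul w (τ * σ) (pcomm σ τ)
    rw [hst, my_sum_split₀ w.length hn _ hmid1, List.take_zero, List.drop_zero,
      List.take_length, List.drop_length, hε.empty, one_mul, hε.empty, mul_one] at h1
    -- now compute ε w (σ * τ) and ε w (τ * σ)
    by_cases hcase : w.length = a + b
    · rw [if_pos hcase]
      have hmid2 : ∀ k, 0 < k → k < w.length → k ≠ a →
          ε (w.take k) σ * ε (w.drop k) τ = 0 := by
        intro k hk0 hkn hka
        rcases lt_or_gt_of_ne hka with hlt | hgt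
        · rw [hσ (w.take k) (my_take_ne_nil hk0 hw) (by rw [List.length_take]; omega), zero_mul]
        · rw [hτ (w.drop k) (my_drop_ne_nil (by omega)) (by rw [List.length_drop]; omega),
            mul_zero]
      have hmid3 : ∀ k, 0 < k → k < w.length → k ≠ b →
          ε (w.take k) τ * ε (w.drop k) σ = 0 := by
        intro k hk0 hkn hkb
        rcases lt_or_gt_of_ne hkb with hlt | hgt
        · rw [hτ (w.take k) (my_take_ne_nil hk0 hw) (by rw [List.length_take]; omega), zero_mul]
        · rw [hσ (w.drop k) (my_drop_ne_nil (by omega)) (by rw [List.length_drop]; omega),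
            mul_zero]
      have h2 := hε.mul w σ τ
      rw [my_sum_split₁ w.length a hn (by omega) (by omega) _ hmid2, List.take_zero,
        List.drop_zero, List.take_length, List.drop_length, hε.empty, one_mul, hε.empty,
        mul_one] at h2
      have h3 := hε.mul w τ σ
      rw [my_sum_split₁ w.length b hn (by omega) (by omega) _ hmid3, List.take_zero,
        List.drop_zero, List.take_length, List.drop_length, hε.empty, one_mul, hε.empty,
        mul_one] at h3
      rw [h2, h3] at h1
      linear_combination -h1
    · rw [if_neg hcase]
      have hmid2 : ∀ k, 0 < k → k < w.length →
          ε (w.take k) σ * ε (w.drop k) τ = 0 := by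
        intro k hk0 hkn
        rcases lt_or_ge k a with hlt | hge
        · rw [hσ (w.take k) (my_take_ne_nil hk0 hw) (by rw [List.length_take]; omega), zero_mul]
        · rw [hτ (w.drop k) (my_drop_ne_nil (by omega)) (by rw [List.length_drop]; omega),
            mul_zero]
      have hmid3 : ∀ k, 0 < k → k < w.length →
          ε (w.take k) τ * ε (w.drop k) σ = 0 := by
        intro k hk0 hkn
        rcases lt_or_ge k b with hlt | hge
        · rw [hτ (w.take k) (my_take_ne_nil hk0 hw) (by rw [List.length_take]; omega), zero_mul]
        · rw [hσ (w.drop k) (my_drop_ne_nil (by omega)) (by rw [List.length_drop]; omega),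
            mul_zero]
      have h2 := hε.mul w σ τ
      rw [my_sum_split₀ w.length hn _ hmid2, List.take_zero, List.drop_zero,
        List.take_length, List.drop_length, hε.empty, one_mul, hε.empty, mul_one] at h2
      have h3 := hε.mul w τ σ
      rw [my_sum_split₀ w.length hn _ hmid3, List.take_zero, List.drop_zero,
        List.take_length, List.drop_length, hε.empty, one_mul, hε.empty, mul_one] at h3
      rw [h2, h3] at h1
      linear_combination -h1

end MagnusLemmas
section TauLemmas

variable {p : ℕ} [Fact p.Prime] {X S : Type*} [LinearOrder X] [Group S]
  [TopologicalSpace S] {ι : X → S} {ε : List X → S → ℤ_[p]}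

theorem tau_single (ι : X → S) (x : X) : tau ι [x] = ι x := by rw [tau]

theorem tau_cons_cons (ι : X → S) (x y : X) (t : List X)
    (h : ∃ k, k < (x :: y :: t).length ∧ 0 < k ∧ IsLyndon ((x :: y :: t).drop k)) :
    tau ι (x :: y :: t) = pcomm (tau ι ((x :: y :: t).take (Nat.find h)))
      (tau ι ((x :: y :: t).drop (Nat.find h))) := by
  rw [tau, dif_pos h]; rfl

theorem tau_eps_step (hε : IsMagnus p ι ε) {u v w : List X}
    (hune : u ≠ []) (hvne : v ≠ [])
    (huv : u ++ v = w) (hwv : w < v)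
    (Hu1 : ∀ z : List X, z ≠ [] → z.length < u.length → ε z (tau ι u) = 0)
    (Hu2 : ε u (tau ι u) = 1)
    (Hu3 : ∀ z : List X, z.length = u.length → z < u → ε z (tau ι u) = 0)
    (Hv1 : ∀ z : List X, z ≠ [] → z.length < v.length → ε z (tau ι v) = 0)
    (Hv2 : ε v (tau ι v) = 1)
    (Hv3 : ∀ z : List X, z.length = v.length → z < v → ε z (tau ι v) = 0)
    (htau : tau ι w = pcomm (tau ι u) (tau ι v)) :
    (∀ z : List X, z ≠ [] → z.length < w.length → ε z (tau ι w) = 0) ∧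
    ε w (tau ι w) = 1 ∧
    (∀ z : List X, z.length = w.length → z < w → ε z (tau ι w) = 0) := by
  have ha : 1 ≤ u.length := List.length_pos_iff.mpr hune
  have hb : 1 ≤ v.length := List.length_pos_iff.mpr hvne
  have hn : w.length = u.length + v.length := by rw [← huv, List.length_append]
  have hDu : Dd ε u.length (tau ι u) := Hu1
  have hDv : Dd ε v.length (tau ι v) := Hv1
  have key := eps_pcomm hε ha hb hDu hDv
  have ht0len : (w.take v.length).length = v.length := by rw [List.length_take]; omega
  have hrne : w.drop v.length ≠ [] := my_drop_ne_nil (by omega)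
  have ht0 : w.take v.length < v := by
    rcases lt_trichotomy (w.take v.length) v with h1 | h1 | h1
    · exact h1
    · exfalso
      have hvw : v < w := by
        conv_rhs => rw [← List.take_append_drop v.length w, h1]
        exact my_lt_append_right v _ hrne
      exact lt_asymm hvw hwv
    · exfalso
      have hvw : v < w := by
        conv_rhs => rw [← List.take_append_drop v.length w]
        rw [my_lt_append_iff _ ht0len hrne]
        exact Or.inl h1
      exact lt_asymm hvw hwv
  refine ⟨?_, ?_, ?_⟩
  · intro z hz hlz
    rw [htau, key z.length z hz le_rfl (by omega), if_neg (by omega)]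
  · have hwne : w ≠ [] := by
      rw [← huv]; intro hh; exact hune (List.append_eq_nil_iff.mp hh).1
    rw [htau, key w.length w hwne le_rfl (by omega), if_pos (by omega)]
    have e1 : w.take u.length = u := by rw [← huv]; exact List.take_left
    have e2 : w.drop u.length = v := by rw [← huv]; exact List.drop_left
    rw [e1, e2, Hu2, Hv2, Hv3 (w.take v.length) ht0len ht0]
    ring
  · intro z hzl hzw
    have hzne : z ≠ [] := List.ne_nil_of_length_pos (by omega)
    rw [htau, key z.length z hzne le_rfl (by omega), if_pos (by omega)]
    have hz1len : (z.take u.length).length = u.length := by rw [List.length_take]; omega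
    have hz2len : (z.drop u.length).length = v.length := by rw [List.length_drop]; omega
    have hP1 : ε (z.take u.length) (tau ι u) * ε (z.drop u.length) (tau ι v) = 0 := by
      by_cases hA : ε (z.take u.length) (tau ι u) = 0
      · rw [hA, zero_mul]
      have hle : u ≤ z.take u.length := not_lt.mp (fun hlt => hA (Hu3 _ hz1len hlt))
      rcases hle.lt_or_eq with hlt | heq
      · exfalso
        have hwz : w < z := by
          rw [← huv]
          conv_rhs => rw [← List.take_append_drop u.length z]
          rw [my_append_lt_append_iff u _ v _ hz1len.symm]
          exact Or.inl hlt
        exact lt_asymm hwz hzw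
      · by_cases hB : ε (z.drop u.length) (tau ι v) = 0
        · rw [hB, mul_zero]
        have hlev : v ≤ z.drop u.length := not_lt.mp (fun hlt => hB (Hv3 _ hz2len hlt))
        rcases hlev.lt_or_eq with hlt | heq2
        · exfalso
          have hwz : w < z := by
            rw [← huv]
            conv_rhs => rw [← List.take_append_drop u.length z, ← heq]
            rw [my_append_lt_append_iff u u v _ rfl]
            exact Or.inr ⟨rfl, hlt⟩
          exact lt_asymm hwz hzw
        · exfalso
          have hzweq : z = w := by
            rw [← huv, heq, heq2]
            exact (List.take_append_drop u.length z).symm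
          rw [hzweq] at hzw; exact lt_irrefl w hzw
    have hP2 : ε (z.take v.length) (tau ι v) * ε (z.drop v.length) (tau ι u) = 0 := by
      by_cases hC : ε (z.take v.length) (tau ι v) = 0
      · rw [hC, zero_mul]
      have hzt0len : (z.take v.length).length = v.length := by rw [List.length_take]; omega
      have hle : v ≤ z.take v.length := not_lt.mp (fun hlt => hC (Hv3 _ hzt0len hlt))
      exfalso
      have hlt : w.take v.length < z.take v.length := lt_of_lt_of_le ht0 hle
      have hwz : w < z := by
        conv_lhs => rw [← List.take_append_drop v.length w]
        conv_rhs => rw [← List.take_append_drop v.length z]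
        rw [my_append_lt_append_iff _ _ _ _ (by rw [ht0len, hzt0len])]
        exact Or.inl hlt
      exact lt_asymm hwz hzw
    rw [hP1, hP2, sub_zero]

theorem tau_eps (hε : IsMagnus p ι ε) :
    ∀ (L : ℕ) (w : List X), w.length ≤ L → IsLyndon w →
      (∀ z : List X, z ≠ [] → z.length < w.length → ε z (tau ι w) = 0) ∧
      ε w (tau ι w) = 1 ∧
      (∀ z : List X, z.length = w.length → z < w → ε z (tau ι w) = 0) := by
  intro L
  induction L with
  | zero =>
    intro w hL hw
    exact absurd (List.length_eq_zero_iff.mp (by omega)) hw.1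
  | succ L ih =>
    intro w hL hw
    match w with
    | [] => exact absurd rfl hw.1
    | [x] =>
      rw [tau_single]
      refine ⟨?_, ?_, ?_⟩
      · intro z hz hlz
        have := List.length_pos_iff.mpr hz
        simp only [List.length_cons, List.length_nil] at hlz
        omega
      · rw [hε.gen x [x], if_pos (Or.inr rfl)]
      · intro z hzl hzlt
        simp only [List.length_cons, List.length_nil] at hzl
        obtain ⟨a, rfl⟩ := List.length_eq_one_iff.mp hzl
        rw [hε.gen x [a], if_neg]
        rintro (h | h)
        · cases h
        · rw [List.cons.injEq] at h
          rw [h.1] at hzlt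
          exact lt_irrefl _ (my_singleton_lt.mp hzlt)
    | x :: y :: t =>
      have h2 : 2 ≤ (x :: y :: t).length := by simp only [List.length_cons]; omega
      have h := exists_lyndon_suffix (x :: y :: t) h2
      have hk1 : Nat.find h < (x :: y :: t).length := (Nat.find_spec h).1
      have hk0 : 0 < Nat.find h := (Nat.find_spec h).2.1
      have hu : IsLyndon ((x :: y :: t).take (Nat.find h)) := take_find_lyndon _ hw h
      have hv : IsLyndon ((x :: y :: t).drop (Nat.find h)) := (Nat.find_spec h).2.2
      have hul : ((x :: y :: t).take (Nat.find h)).length = Nat.find h := by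
        rw [List.length_take]; omega
      have hvl : ((x :: y :: t).drop (Nat.find h)).length
          = (x :: y :: t).length - Nat.find h := List.length_drop
      have IHu := ih _ (by omega) hu
      have IHv := ih _ (by omega) hv
      exact tau_eps_step hε hu.1 hv.1 (List.take_append_drop _ _)
        (hw.2 (Nat.find h) hk1 hk0) IHu.1 IHu.2.1 IHu.2.2 IHv.1 IHv.2.1 IHv.2.2
        (tau_cons_cons ι x y t h)

end TauLemmas
/-- Let `p` be a prime, `S` the free profinite group on a totally ordered basis `X`, `n ≥ 2`,
and `ε` the coefficients of the continuous Magnus homomorphism.  For Lyndon words `w, w'` of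
lengths in `J(n)`, the entries `⟨w, w'⟩_n = π_{|w|}(ε_w(σ_{w'}))` of the fundamental matrix
satisfy `⟨w, w⟩_n = 1` (i.e. `π(ε_w(σ_w)) = p^{j_n(|w|)}`, which is `1` under the
identification of `p^{j_n(|w|)}ℤ/p^{j_n(|w|)+1}ℤ` with `ℤ/p`), and `⟨w, w'⟩_n = 0` whenever
`w ≺ w'`; hence the fundamental matrix of level `n` of the Lyndon words, the transpose of
`[⟨w,w'⟩_n]_{w,w'}` with rows and columns ordered by `≼`, is unitriangular. -/
theorem stmt_7 {X S : Type*} [LinearOrder X] [Group S] [TopologicalSpace S]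
    [IsTopologicalGroup S] (p n : ℕ) [Fact p.Prime] (hn : 2 ≤ n)
    (ι : X → S) (hfree : IsFreeProfinite X S ι)
    (ε : List X → S → ℤ_[p]) (hε : IsMagnus p ι ε) :
    (∀ w : List X, IsLyndon w → w.length ∈ Jset p n →
      PadicInt.toZModPow (jn p n w.length + 1) (ε w (sigw p n ι w)) =
        (p : ZMod (p ^ (jn p n w.length + 1))) ^ jn p n w.length) ∧
    (∀ w w' : List X, IsLyndon w → IsLyndon w' →
      w.length ∈ Jset p n → w'.length ∈ Jset p n → prec w w' →
      PadicInt.toZModPow (jn p n w.length + 1) (ε w (sigw p n ι w')) = 0) := by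
  have key : ∀ w : List X, IsLyndon w →
      (∀ z : List X, z ≠ [] → z.length < w.length → ε z (tau ι w) = 0) ∧
      ε w (tau ι w) = 1 ∧
      (∀ z : List X, z.length = w.length → z < w → ε z (tau ι w) = 0) :=
    fun w hw => tau_eps hε w.length w le_rfl hw
  constructor
  · intro w hw _
    have h1 : ε w (sigw p n ι w)
        = ((p ^ jn p n w.length : ℕ) : ℤ_[p]) * ε w (tau ι w) :=
      eps_pow hε (key w hw).1 (p ^ jn p n w.length) w hw.1 le_rfl
    rw [h1, (key w hw).2.1, mul_one]
    push_cast
    rw [map_pow, map_natCast]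
  · intro w w' hw hw' _ _ hprec
    have h0 : ε w (tau ι w') = 0 := by
      rcases hprec with hlt | ⟨hlen, hltlex⟩
      · exact (key w' hw').1 w hw.1 hlt
      · exact (key w' hw').2.2 w hlen hltlex
    have hle : w.length ≤ w'.length := by
      rcases hprec with hlt | ⟨hlen, -⟩
      · omega
      · omega
    have h1 : ε w (sigw p n ι w')
        = ((p ^ jn p n w'.length : ℕ) : ℤ_[p]) * ε w (tau ι w') :=
      eps_pow hε (key w' hw').1 (p ^ jn p n w'.length) w hw.1 hle
    rw [h1, h0, mul_zero, map_zero]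
end

section
/- Let p be a prime, i ≥ 1, j ≥ 0, and let U = U_i(Z/p^{j+1}) be the group of unitriangular (i+1)×(i+1) matrices over Z/p^{j+1}. For 1 ≤ i' ≤ i let U^{(i')} be the subgroup of U consisting of matrices that vanish on the first i'−1 diagonals above the main diagonal, and let j' ≥ 0. Then the subgroup (U^{(i')})^{p^{j'}} generated by the p^{j'}-th powers of elements of U^{(i')} is trivial if and only if j' ≥ j + 1 + ⌊log_p(i/i')⌋. -/
/-! If `y ∈ U^{(c)}` then `N = y - 1` vanishes below the `c`-th superdiagonal, so `N ^ k = 0`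
once `k c > i`, and the binomial theorem gives `y ^ q = 1` as soon as `p ^ (j + 1)` divides
`C(q, k)` for `1 ≤ k ≤ ⌊i / c⌋`. Conversely, for the shift `S` by `c` diagonals, the `(0, k c)`
entry of `(1 + S) ^ q` is `C(q, k)`, so these divisibilities are also necessary. Kummer's formula
`v_p C(p ^ j', k) = j' - v_p k` turns them into `j + 1 + ⌊log_p ⌊i / c⌋⌋ ≤ j'`, the extreme case
being `k = p ^ min (⌊log_p ⌊i / c⌋⌋, j')`. -/

variable (R : Type*) [CommRing R] (m : ℕ)

/-- A square matrix is unitriangular if it is upper triangular with all diagonal entries `1`. -/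
def IsUnitriangular (M : Matrix (Fin m) (Fin m) R) : Prop :=
  (∀ k, M k k = 1) ∧ ∀ k l : Fin m, l < k → M k l = 0

/-- The group of unitriangular `m × m` matrices over `R`, as a subgroup of the units of the
matrix ring. -/
def UT : Subgroup (Matrix (Fin m) (Fin m) R)ˣ where
  carrier := {M | IsUnitriangular R m (M : Matrix (Fin m) (Fin m) R)}
  one_mem' := by
    constructor
    · intro k; simp [Matrix.one_apply]
    · intro k l h; simp [Matrix.one_apply, (ne_of_lt h).symm]
  mul_mem' := by
    rintro A B ⟨hA1, hA2⟩ ⟨hB1, hB2⟩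
    constructor
    · intro k
      rw [Units.val_mul, Matrix.mul_apply]
      rw [Finset.sum_eq_single k]
      · rw [hA1, hB1, one_mul]
      · intro j _ hj
        rcases lt_or_gt_of_ne hj with h | h
        · rw [hA2 _ _ h, zero_mul]
        · rw [hB2 _ _ h, mul_zero]
      · intro h; exact absurd (Finset.mem_univ k) h
    · intro k l hlk
      rw [Units.val_mul, Matrix.mul_apply]
      apply Finset.sum_eq_zero
      intro j _
      rcases lt_or_ge (j : Fin m) k with h | h
      · rw [hA2 _ _ h, zero_mul]
      · rw [hB2 _ _ (lt_of_lt_of_le hlk h), mul_zero]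
  inv_mem' := by
    rintro A ⟨hA1, hA2⟩
    have hcoe : ((A⁻¹ : (Matrix (Fin m) (Fin m) R)ˣ) : Matrix (Fin m) (Fin m) R) =
        ((A : Matrix (Fin m) (Fin m) R))⁻¹ := Matrix.coe_units_inv A
    haveI : Invertible (A : Matrix (Fin m) (Fin m) R) := A.invertible
    have hBT : Matrix.BlockTriangular (A : Matrix (Fin m) (Fin m) R) id :=
      fun k l h => hA2 k l h
    have hBTinv : Matrix.BlockTriangular ((A : Matrix (Fin m) (Fin m) R))⁻¹ id :=
      Matrix.blockTriangular_inv_of_blockTriangular hBT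
    constructor
    · intro k
      have hmul := congrFun (congrFun
        (Matrix.mul_inv_of_invertible (A : Matrix (Fin m) (Fin m) R)) k) k
      rw [Matrix.mul_apply] at hmul
      rw [Finset.sum_eq_single k] at hmul
      · rw [hA1] at hmul
        rw [hcoe]
        simpa using hmul
      · intro j _ hj
        rcases lt_or_gt_of_ne hj with h | h
        · rw [hA2 _ _ h, zero_mul]
        · rw [hBTinv (show id k < id j from h), mul_zero]
      · intro hmem; exact absurd (Finset.mem_univ k) hmem
    · intro k l h
      rw [hcoe]
      exact hBTinv h

/-- The subgroup `U^{(i')}` of the unitriangular group, consisting of the matrices whose entries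
on the first `i' - 1` diagonals above the main diagonal all vanish. -/
def UTk (i' : ℕ) : Subgroup ↥(UT R m) where
  carrier := {M | ∀ k l : Fin m, (k : ℕ) < l → (l : ℕ) < k + i' →
    ((M : (Matrix (Fin m) (Fin m) R)ˣ) : Matrix (Fin m) (Fin m) R) k l = 0}
  one_mem' := by
    intro k l h1 h2
    have hkl : k ≠ l := fun h => by simp [h] at h1
    simp [Matrix.one_apply, hkl]
  mul_mem' := by
    rintro A B hA hB k l hkl hli
    have hAut := A.2
    have hBut := B.2
    show ((↑A * ↑B : (Matrix (Fin m) (Fin m) R)ˣ) : Matrix (Fin m) (Fin m) R) k l = 0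
    rw [Units.val_mul, Matrix.mul_apply]
    apply Finset.sum_eq_zero
    intro j _
    rcases lt_trichotomy (j : ℕ) (k : ℕ) with h | h | h
    · rw [hAut.2 k j (Fin.lt_def.mpr h), zero_mul]
    · have hj : j = k := Fin.ext h
      subst hj
      rw [hB j l hkl hli, mul_zero]
    · rcases lt_or_ge (l : ℕ) (j : ℕ) with h' | h'
      · rw [hBut.2 j l (Fin.lt_def.mpr h'), mul_zero]
      · rw [hA k j h (lt_of_le_of_lt h' hli), zero_mul]
  inv_mem' := by
    rintro A hA k l hkl hli
    have hAut := A.2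
    have hinv := (A⁻¹).2
    have hone : ((↑A : (Matrix (Fin m) (Fin m) R)ˣ) : Matrix (Fin m) (Fin m) R) *
        ((↑A⁻¹ : (Matrix (Fin m) (Fin m) R)ˣ) : Matrix (Fin m) (Fin m) R) = 1 := by
      rw [← Units.val_mul]
      norm_cast
      rw [mul_inv_cancel]
      rfl
    have hentry := congrFun (congrFun hone k) l
    rw [Matrix.mul_apply] at hentry
    rw [Finset.sum_eq_single k] at hentry
    · have hkl' : k ≠ l := fun h => by simp [h] at hkl
      rw [hAut.1] at hentry
      rw [Matrix.one_apply_ne hkl'] at hentry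
      simpa using hentry
    · intro j _ hj
      rcases lt_trichotomy (j : ℕ) (k : ℕ) with h | h | h
      · rw [hAut.2 k j (Fin.lt_def.mpr h), zero_mul]
      · exact absurd (Fin.ext h) hj
      · rcases lt_or_ge (j : ℕ) ((k : ℕ) + i') with h' | h'
        · rw [hA k j h h', zero_mul]
        · rw [hinv.2 j l (Fin.lt_def.mpr (lt_of_lt_of_le hli h')), mul_zero]
    · intro hmem; exact absurd (Finset.mem_univ k) hmem

/-- The subgroup generated by the `q`-th powers of the elements of a subgroup. -/
def pPow {G : Type*} [Group G] (K : Subgroup G) (q : ℕ) : Subgroup G :=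
  Subgroup.closure {x | ∃ y ∈ K, x = y ^ q}

/-- An auxiliary product identity for corner matrices. -/

theorem corner_mul (p j i : ℕ) (R : Type*) [CommRing R] (hi : 0 < i) (a b : R) :
    (1 + Matrix.single (0 : Fin (i+1)) (Fin.last i) ((p : R) ^ j * a)) *
      (1 + Matrix.single (0 : Fin (i+1)) (Fin.last i) ((p : R) ^ j * b)) =
    1 + Matrix.single (0 : Fin (i+1)) (Fin.last i) ((p : R) ^ j * (a + b)) := by
  have hne : Fin.last i ≠ (0 : Fin (i+1)) := by simp [Fin.ext_iff, Fin.last]; omega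
  rw [mul_add, add_mul, add_mul, one_mul, mul_one, one_mul,
    Matrix.single_mul_single_of_ne (h := hne), mul_add, Matrix.single_add]
  abel


/-- The subgroup `I + p^j (ℤ/p^{j+1}) E_{1,i+1}` of the unitriangular `(i+1) × (i+1)` matrices
over `ℤ/p^{j+1}`: matrices differing from the identity only at the upper-right corner entry,
by a multiple of `p^j`. -/
def cornerSub (p j i : ℕ) : Subgroup ↥(UT (ZMod (p ^ (j + 1))) (i + 1)) where
  carrier := {M | ∃ a : ZMod (p ^ (j + 1)),
    ((M : (Matrix (Fin (i + 1)) (Fin (i + 1)) (ZMod (p ^ (j + 1))))ˣ) :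
        Matrix (Fin (i + 1)) (Fin (i + 1)) (ZMod (p ^ (j + 1)))) =
      1 + Matrix.single 0 (Fin.last i) ((p : ZMod (p ^ (j + 1))) ^ j * a)}
  one_mem' := ⟨0, by simp⟩
  mul_mem' := by
    rintro A B ⟨a, ha⟩ ⟨b, hb⟩
    refine ⟨a + b, ?_⟩
    have hAB : ((↑(A * B) : (Matrix (Fin (i + 1)) (Fin (i + 1)) (ZMod (p ^ (j + 1))))ˣ) :
        Matrix (Fin (i + 1)) (Fin (i + 1)) (ZMod (p ^ (j + 1)))) =
        ((↑A : (Matrix (Fin (i + 1)) (Fin (i + 1)) (ZMod (p ^ (j + 1))))ˣ) :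
          Matrix (Fin (i + 1)) (Fin (i + 1)) (ZMod (p ^ (j + 1)))) *
        ((↑B : (Matrix (Fin (i + 1)) (Fin (i + 1)) (ZMod (p ^ (j + 1))))ˣ) :
          Matrix (Fin (i + 1)) (Fin (i + 1)) (ZMod (p ^ (j + 1)))) := rfl
    rw [hAB, ha, hb]
    rcases Nat.eq_zero_or_pos i with hi | hi
    · subst hi
      have hca : (p : ZMod (p ^ (j + 1))) ^ j * a = 0 := by
        have hd := A.2.1 0
        rw [ha] at hd
        simpa [Matrix.add_apply, Matrix.one_apply, Fin.last] using hd
      have hcb : (p : ZMod (p ^ (j + 1))) ^ j * b = 0 := by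
        have hd := B.2.1 0
        rw [hb] at hd
        simpa [Matrix.add_apply, Matrix.one_apply, Fin.last] using hd
      simp [mul_add, hca, hcb]
    · exact corner_mul p j i _ hi a b
  inv_mem' := by
    rintro A ⟨a, ha⟩
    refine ⟨-a, ?_⟩
    have key : ((↑A : (Matrix (Fin (i + 1)) (Fin (i + 1)) (ZMod (p ^ (j + 1))))ˣ) :
        Matrix (Fin (i + 1)) (Fin (i + 1)) (ZMod (p ^ (j + 1)))) *
        (1 + Matrix.single 0 (Fin.last i) ((p : ZMod (p ^ (j + 1))) ^ j * (-a))) =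
        1 := by
      rcases Nat.eq_zero_or_pos i with hi | hi
      · subst hi
        have hca : (p : ZMod (p ^ (j + 1))) ^ j * a = 0 := by
          have hd := A.2.1 0
          rw [ha] at hd
          simpa [Matrix.add_apply, Matrix.one_apply, Fin.last] using hd
        have hca' : (p : ZMod (p ^ (j + 1))) ^ j * (-a) = 0 := by
          rw [mul_neg, hca, neg_zero]
        rw [ha, hca, hca']
        simp
      · rw [ha, corner_mul p j i _ hi a (-a)]
        simp
    calc ((↑A⁻¹ : (Matrix (Fin (i + 1)) (Fin (i + 1)) (ZMod (p ^ (j + 1))))ˣ) :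
          Matrix (Fin (i + 1)) (Fin (i + 1)) (ZMod (p ^ (j + 1)))) =
        ((↑A⁻¹ : (Matrix (Fin (i + 1)) (Fin (i + 1)) (ZMod (p ^ (j + 1))))ˣ) :
          Matrix (Fin (i + 1)) (Fin (i + 1)) (ZMod (p ^ (j + 1)))) * 1 := (mul_one _).symm
      _ = ((↑A⁻¹ : (Matrix (Fin (i + 1)) (Fin (i + 1)) (ZMod (p ^ (j + 1))))ˣ) :
          Matrix (Fin (i + 1)) (Fin (i + 1)) (ZMod (p ^ (j + 1)))) *
          (((↑A : (Matrix (Fin (i + 1)) (Fin (i + 1)) (ZMod (p ^ (j + 1))))ˣ) :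
            Matrix (Fin (i + 1)) (Fin (i + 1)) (ZMod (p ^ (j + 1)))) *
          (1 + Matrix.single 0 (Fin.last i)
            ((p : ZMod (p ^ (j + 1))) ^ j * (-a)))) := by rw [key]
      _ = 1 + Matrix.single 0 (Fin.last i)
            ((p : ZMod (p ^ (j + 1))) ^ j * (-a)) := by
          rw [← mul_assoc, ← Units.val_mul]
          norm_cast
          rw [inv_mul_cancel]
          simp

namespace Matrix

section

variable {R} {n : ℕ}

def IsUpperFrom (c : ℕ) (N : Matrix (Fin n) (Fin n) R) : Prop :=
  ∀ k l : Fin n, (l : ℕ) < k + c → N k l = 0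

theorem IsUpperFrom.mul {a b : ℕ} {A B : Matrix (Fin n) (Fin n) R} (hA : IsUpperFrom a A)
    (hB : IsUpperFrom b B) : IsUpperFrom (a + b) (A * B) := by
  intro k l hl
  rw [mul_apply]
  refine Finset.sum_eq_zero fun x _ => ?_
  rcases lt_or_ge (x : ℕ) (k + a) with h | h
  · rw [hA k x h, zero_mul]
  · rw [hB x l (by omega), mul_zero]

theorem IsUpperFrom.pow {c : ℕ} {A : Matrix (Fin n) (Fin n) R} (hA : IsUpperFrom c A) (m : ℕ) :
    IsUpperFrom (m * c) (A ^ m) := by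
  induction m with
  | zero => exact fun k l hl => one_apply_ne (by rintro rfl; omega)
  | succ m ih => simpa only [pow_succ, Nat.succ_mul] using ih.mul hA

theorem IsUpperFrom.eq_zero {c : ℕ} {A : Matrix (Fin n) (Fin n) R} (hA : IsUpperFrom c A)
    (hn : n ≤ c) : A = 0 :=
  ext fun k l => hA k l (by omega)

theorem IsUpperFrom.isNilpotent {c : ℕ} {A : Matrix (Fin n) (Fin n) R} (hA : IsUpperFrom c A)
    (hc : 0 < c) : IsNilpotent A :=
  ⟨n, (hA.pow n).eq_zero (Nat.le_mul_of_pos_right n hc)⟩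

theorem IsUpperFrom.one_add_pow_eq_one {c q : ℕ} {N : Matrix (Fin n) (Fin n) R}
    (hN : IsUpperFrom c N) (hq : ∀ k, 0 < k → k * c < n → (q.choose k : R) = 0) :
    (1 + N) ^ q = 1 := by
  rw [add_comm, (Commute.one_right N).add_pow, Finset.sum_eq_single 0 _ (by simp)]
  · simp
  intro k _ hk
  rcases lt_or_ge (k * c) n with h | h
  · rw [← diagonal_natCast, hq k (Nat.pos_of_ne_zero hk) h, diagonal_zero, mul_zero]
  · simp [(hN.pow k).eq_zero h]

def shiftMatrix (c : ℕ) : Matrix (Fin n) (Fin n) R :=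
  of fun k l => if (l : ℕ) = k + c then 1 else 0

theorem shiftMatrix_zero : (shiftMatrix 0 : Matrix (Fin n) (Fin n) R) = 1 := by
  ext k l
  simp [shiftMatrix, one_apply, Fin.ext_iff, eq_comm]

theorem shiftMatrix_mul (a b : ℕ) :
    (shiftMatrix a * shiftMatrix b : Matrix (Fin n) (Fin n) R) = shiftMatrix (a + b) := by
  ext k l
  simp only [mul_apply, shiftMatrix, of_apply, ite_mul, one_mul, zero_mul]
  rcases lt_or_ge (k + a : ℕ) n with h | h
  · rw [Finset.sum_eq_single ⟨k + a, h⟩ (fun x _ hx => if_neg fun e => hx (Fin.ext e))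
      (by simp)]
    simp [add_assoc]
  · rw [Finset.sum_eq_zero fun x _ => if_neg (by omega), if_neg (by omega)]

theorem shiftMatrix_pow (c m : ℕ) :
    (shiftMatrix c : Matrix (Fin n) (Fin n) R) ^ m = shiftMatrix (m * c) := by
  induction m with
  | zero => simp [shiftMatrix_zero]
  | succ m ih => rw [pow_succ, ih, shiftMatrix_mul, Nat.succ_mul]

theorem isUpperFrom_shiftMatrix (c : ℕ) :
    IsUpperFrom c (shiftMatrix c : Matrix (Fin n) (Fin n) R) :=
  fun k l hl => if_neg (by omega)

theorem one_add_shiftMatrix_pow_apply {c q m : ℕ} (hc : 0 < c) {k l : Fin n}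
    (hkl : (l : ℕ) = k + m * c) :
    ((1 + shiftMatrix c : Matrix (Fin n) (Fin n) R) ^ q) k l = q.choose m := by
  rw [add_comm, (Commute.one_right _).add_pow, sum_apply]
  simp only [one_pow, mul_one, ← diagonal_natCast, mul_diagonal, shiftMatrix_pow]
  simp only [shiftMatrix, of_apply, ite_mul, one_mul, zero_mul]
  rw [Finset.sum_eq_single m]
  · simp [hkl]
  · intro b _ hb
    exact if_neg fun e => hb (Nat.eq_of_mul_eq_mul_right hc (by omega))
  · intro hm
    simp [Nat.choose_eq_zero_of_lt (by simpa using hm : q < m)]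

end

end Matrix

namespace Nat

theorem Prime.pow_dvd_choose_prime_pow_iff {p a b k : ℕ} (hp : p.Prime) (hk0 : k ≠ 0)
    (hk : k ≤ p ^ a) : p ^ b ∣ (p ^ a).choose k ↔ b + k.factorization p ≤ a := by
  rw [hp.pow_dvd_iff_le_factorization (choose_pos hk).ne', factorization_choose_prime_pow hp hk hk0]
  have : k.factorization p ≤ a := by
    have := factorization_choose_prime_pow_add_factorization hp hk hk0
    omega
  omega

theorem factorization_le_log (p : ℕ) {k : ℕ} (hp : 1 < p) (hk : k ≠ 0) :
    k.factorization p ≤ log p k :=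
  le_log_of_pow_le hp (ordProj_le p hk)

theorem forall_pow_dvd_choose_prime_pow_iff {p a b d : ℕ} (hp : p.Prime) (hb : 0 < b)
    (hd : d ≠ 0) :
    (∀ k, 0 < k → k ≤ d → p ^ b ∣ (p ^ a).choose k) ↔ b + log p d ≤ a := by
  constructor
  · intro h
    set e := min (log p d) a
    have hed : p ^ e ≤ d := (Nat.pow_le_pow_right hp.pos (min_le_left _ _)).trans
      (pow_log_le_self p hd)
    have hea : p ^ e ≤ p ^ a := Nat.pow_le_pow_right hp.pos (min_le_right _ _)
    have := (hp.pow_dvd_choose_prime_pow_iff (pow_pos hp.pos e).ne' hea).1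
      (h _ (pow_pos hp.pos e) hed)
    rw [factorization_pow_self hp] at this
    omega
  · intro h k hk0 hkd
    rcases le_or_gt k (p ^ a) with hka | hka
    · refine (hp.pow_dvd_choose_prime_pow_iff hk0.ne' hka).2 ?_
      have := (factorization_le_log p hp.one_lt hk0.ne').trans (log_mono_right hkd)
      omega
    · rw [choose_eq_zero_of_lt hka]
      exact dvd_zero _

end Nat

theorem pPow_eq_bot_iff {G : Type*} [Group G] (K : Subgroup G) (q : ℕ) :
    pPow K q = ⊥ ↔ ∀ y ∈ K, y ^ q = 1 := by
  simp only [pPow, Subgroup.closure_eq_bot_iff, Set.subset_def, Set.mem_ofPred_eq,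
    Set.mem_singleton_iff]
  exact ⟨fun h y hy => h _ ⟨y, hy, rfl⟩, by rintro h _ ⟨y, hy, rfl⟩; exact h y hy⟩

section

variable {R} {n : ℕ}

theorem isUpperFrom_sub_one_of_mem_UTk {c : ℕ} {y : UT R n} (hy : y ∈ UTk R n c) :
    (((y : (Matrix (Fin n) (Fin n) R)ˣ) : Matrix (Fin n) (Fin n) R) - 1).IsUpperFrom c := by
  intro k l hl
  rw [Matrix.sub_apply]
  rcases lt_trichotomy (l : ℕ) k with h | h | h
  · rw [y.2.2 k l h, Matrix.one_apply_ne (by rintro rfl; omega), sub_zero]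
  · obtain rfl := Fin.ext h
    rw [y.2.1, Matrix.one_apply_eq, sub_self]
  · rw [hy k l h hl, Matrix.one_apply_ne (by rintro rfl; omega), sub_zero]

theorem exists_mem_UTk_of_isUpperFrom {c : ℕ} (hc : 0 < c) {N : Matrix (Fin n) (Fin n) R}
    (hN : N.IsUpperFrom c) :
    ∃ y ∈ UTk R n c, ((y : (Matrix (Fin n) (Fin n) R)ˣ) : Matrix (Fin n) (Fin n) R) = 1 + N := by
  obtain ⟨u, hu⟩ := (hN.isNilpotent hc).isUnit_one_add
  have hentry : ∀ k l : Fin n, k ≠ l → (l : ℕ) < k + c →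
      (u : Matrix (Fin n) (Fin n) R) k l = 0 := fun k l hkl hl => by
    rw [hu, Matrix.add_apply, Matrix.one_apply_ne hkl, hN k l hl, zero_add]
  have hUT : u ∈ UT R n :=
    ⟨fun k => by rw [hu, Matrix.add_apply, Matrix.one_apply_eq, hN k k (by omega), add_zero],
      fun k l hlk => hentry k l hlk.ne' (by omega)⟩
  exact ⟨⟨u, hUT⟩, fun k l hkl hl => hentry k l (by rintro rfl; omega) hl, hu⟩

theorem pPow_UTk_eq_bot_iff {c q : ℕ} (hc : 0 < c) :
    pPow (UTk R n c) q = ⊥ ↔ ∀ k, 0 < k → k * c < n → (q.choose k : R) = 0 := by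
  rw [pPow_eq_bot_iff]
  constructor
  · intro h k hk hkc
    obtain ⟨y, hy, hval⟩ :=
      exists_mem_UTk_of_isUpperFrom hc (Matrix.isUpperFrom_shiftMatrix (R := R) (n := n) c)
    have hpow := congrArg (fun M : UT R n =>
      ((M : (Matrix (Fin n) (Fin n) R)ˣ) : Matrix (Fin n) (Fin n) R) ⟨0, by omega⟩ ⟨k * c, hkc⟩)
      (h y hy)
    simp only [Subgroup.coe_pow, Units.val_pow_eq_pow_val, hval] at hpow
    rw [Matrix.one_add_shiftMatrix_pow_apply hc (m := k) (by simp)] at hpow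
    simpa [Matrix.one_apply, Fin.ext_iff, (Nat.mul_pos hk hc).ne] using hpow
  · intro h y hy
    have hM := (isUpperFrom_sub_one_of_mem_UTk hy).one_add_pow_eq_one h
    rw [add_sub_cancel] at hM
    exact Subtype.ext (Units.ext (by simpa using hM))

end

theorem stmt_9_general (p i i' j j' : ℕ) (hp : p.Prime) (h1 : 1 ≤ i') (h2 : i' ≤ i) :
    pPow (UTk (ZMod (p ^ (j + 1))) (i + 1) i') (p ^ j') = ⊥ ↔
      j + 1 + Nat.log p (i / i') ≤ j' := by
  rw [pPow_UTk_eq_bot_iff h1, ← Nat.forall_pow_dvd_choose_prime_pow_iff hp j.succ_pos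
    (Nat.div_pos h2 h1).ne']
  refine forall_congr' fun k => imp_congr_right fun _ => ?_
  rw [Nat.lt_succ_iff, ← Nat.le_div_iff_mul_le h1, ZMod.natCast_eq_zero_iff]

/-- Let `p` be a prime, `i ≥ 1`, `j ≥ 0`, `U = U_i(ℤ/p^{j+1})` the group of unitriangular
`(i+1) × (i+1)` matrices, `1 ≤ i' ≤ i`, and `j' ≥ 0`.  The subgroup of `U` generated by the
`p^{j'}`-th powers of elements of `U^{(i')}` is trivial if and only if
`j' ≥ j + 1 + ⌊log_p (i / i')⌋`. -/
theorem stmt_9 (p i i' j j' : ℕ) (hp : p.Prime) (hi : 1 ≤ i) (h1 : 1 ≤ i') (h2 : i' ≤ i) :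
    pPow (UTk (ZMod (p ^ (j + 1))) (i + 1) i') (p ^ j') = ⊥ ↔
      j + 1 + Nat.log p (i / i') ≤ j' :=
  stmt_9_general p i i' j j' hp h1 h2
end
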